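/- A nonempty set S ⊆ S_Φ is closed and s-convex if and only if there exists a compact convex set C ⊆ ℝⁿ \ {0} with S = ρ(C). -/

import Mathlib

/-!
Since `ρ` is invariant under positive scaling, `ρ (a • x + b • y)` with `a, b ≥ 0`, `a + b > 0`
is `ρ` of a convex combination of `x` and `y`. Hence s-convexity of `S ⊆ S_Φ` makes the cone
`ρ⁻¹(S)` convex; this cone contains `S` and misses `0`, so `C = conv S` works, and it is compact
because `S_Φ` is bounded (`Φ ≥ m ‖·‖` with `m > 0` by compactness of the Euclidean unit sphere).
Conversely `ρ(C)` is s-convex by the same identity and closed as the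
continuous image of the compact set `C ⊆ ℝⁿ \ {0}`.
-/

open Set
open scoped RealInnerProductSpace

/-- `rho Φ x = x / Φ x` (equal to `0` when `Φ x = 0`, in particular `rho Φ 0 = 0`). -/
noncomputable def rho {n : ℕ} (Φ : EuclideanSpace ℝ (Fin n) → ℝ)
    (x : EuclideanSpace ℝ (Fin n)) : EuclideanSpace ℝ (Fin n) := (Φ x)⁻¹ • x

/-- The `Φ`-sphere `S_Φ = {x | Φ x = 1}`. -/
def sphereSet {n : ℕ} (Φ : EuclideanSpace ℝ (Fin n) → ℝ) : Set (EuclideanSpace ℝ (Fin n)) :=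
  {x | Φ x = 1}

/-- `S` is s-convex: `ρ(λx + (1-λ)y) ∈ S` for all `x, y ∈ S`, `λ ∈ [0,1]`. -/
def SConvex {n : ℕ} (Φ : EuclideanSpace ℝ (Fin n) → ℝ)
    (S : Set (EuclideanSpace ℝ (Fin n))) : Prop :=
  ∀ x ∈ S, ∀ y ∈ S, ∀ l : ℝ, l ∈ Set.Icc (0 : ℝ) 1 → rho Φ (l • x + (1 - l) • y) ∈ S

theorem IsCompact.convexHull {E : Type*} [NormedAddCommGroup E] [NormedSpace ℝ E]
    [FiniteDimensional ℝ E] {s : Set E} (hs : IsCompact s) : IsCompact (convexHull ℝ s) := by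
  let combo (k : ℕ) (p : (Fin k → ℝ) × (Fin k → E)) : E := ∑ i, p.1 i • p.2 i
  let K (k : ℕ) : Set ((Fin k → ℝ) × (Fin k → E)) :=
    stdSimplex ℝ (Fin k) ×ˢ univ.pi fun _ => s
  -- Carathéodory: an affinely independent family in `E` has at most `finrank ℝ E + 1` points.
  have hull_eq : _root_.convexHull ℝ s = ⋃ k : Fin (Module.finrank ℝ E + 2), combo k '' K k := by
    refine Subset.antisymm (fun x hx => ?_) (iUnion_subset fun k => ?_)
    · obtain ⟨ι, _, z, w, hzs, hind, hw, hw1, rfl⟩ := eq_pos_convex_span_of_mem_convexHull hx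
      have hcard : Fintype.card ι < Module.finrank ℝ E + 2 :=
        Nat.lt_succ_of_le (hind.card_le_finrank_succ.trans
          (Nat.succ_le_succ (Submodule.finrank_le _)))
      let e := (Fintype.equivFin ι).symm
      refine mem_iUnion.2 ⟨⟨_, hcard⟩, (w ∘ e, z ∘ e), ⟨⟨fun i => (hw _).le, ?_⟩, ?_⟩, ?_⟩
      · simpa [e.sum_comp] using hw1
      · exact fun i _ => hzs (mem_range_self _)
      · exact e.sum_comp fun i => w i • z i
    · rintro _ ⟨⟨w, z⟩, ⟨⟨hw0, hw1⟩, hz⟩, rfl⟩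
      exact (convex_convexHull ℝ s).sum_mem (fun i _ => hw0 i) hw1
        fun i _ => subset_convexHull ℝ s (hz i (mem_univ i))
  rw [hull_eq]
  refine isCompact_iUnion fun k => ((isCompact_stdSimplex ℝ _).prod
    (isCompact_univ_pi fun _ => hs)).image ?_
  fun_prop

theorem exists_pos_mul_norm_le_of_homogeneous {E : Type*} [NormedAddCommGroup E]
    [NormedSpace ℝ E] [FiniteDimensional ℝ E] {Φ : E → ℝ} (hc : Continuous Φ)
    (hhom : ∀ t : ℝ, 0 ≤ t → ∀ x, Φ (t • x) = t * Φ x) (hpos : ∀ x, x ≠ 0 → 0 < Φ x) :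
    ∃ m > 0, ∀ x, m * ‖x‖ ≤ Φ x := by
  have hΦ0 : Φ 0 = 0 := by simpa using hhom 0 le_rfl 0
  rcases (Metric.sphere (0 : E) 1).eq_empty_or_nonempty with hempty | hne
  · refine ⟨1, one_pos, fun x => ?_⟩
    obtain rfl : x = 0 := by
      by_contra hx
      have : ‖x‖⁻¹ • x ∈ Metric.sphere (0 : E) 1 := by
        simp [norm_smul, norm_ne_zero_iff.2 hx]
      simp [hempty] at this
    simp [hΦ0]
  obtain ⟨u, hu, hmin⟩ := (isCompact_sphere (0 : E) 1).exists_isMinOn hne hc.continuousOn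
  refine ⟨Φ u, hpos u (ne_zero_of_mem_unit_sphere ⟨u, hu⟩), fun x => ?_⟩
  rcases eq_or_ne x 0 with rfl | hx
  · simp [hΦ0]
  have hnx : 0 < ‖x‖ := norm_pos_iff.2 hx
  have hunit : ‖x‖⁻¹ • x ∈ Metric.sphere (0 : E) 1 := by simp [norm_smul, hnx.ne']
  calc Φ u * ‖x‖ ≤ Φ (‖x‖⁻¹ • x) * ‖x‖ := by gcongr; exact hmin hunit
    _ = Φ x := by rw [hhom _ (by positivity)]; field_simp

section rho

variable {n : ℕ} {Φ : EuclideanSpace ℝ (Fin n) → ℝ}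

@[simp]
theorem rho_zero : rho Φ 0 = 0 := smul_zero _

theorem rho_of_mem_sphereSet {x : EuclideanSpace ℝ (Fin n)} (hx : x ∈ sphereSet Φ) :
    rho Φ x = x := by
  simp [rho, show Φ x = 1 from hx]

theorem smul_rho {x : EuclideanSpace ℝ (Fin n)} (hx : Φ x ≠ 0) : Φ x • rho Φ x = x := by
  simp [rho, smul_smul, hx]

variable (hhom : ∀ t : ℝ, 0 ≤ t → ∀ x, Φ (t • x) = t * Φ x)
include hhom

theorem zero_notMem_sphereSet : (0 : EuclideanSpace ℝ (Fin n)) ∉ sphereSet Φ := by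
  simp [sphereSet, by simpa using hhom 0 le_rfl 0]

theorem rho_smul_of_pos {t : ℝ} (ht : 0 < t) (x : EuclideanSpace ℝ (Fin n)) :
    rho Φ (t • x) = rho Φ x := by
  rw [rho, rho, hhom t ht.le, mul_inv, smul_smul, mul_right_comm, inv_mul_cancel₀ ht.ne', one_mul]

theorem exists_rho_smul_add_smul_eq {a b : ℝ} (ha : 0 ≤ a) (hb : 0 ≤ b) (hab : 0 < a + b)
    (x y : EuclideanSpace ℝ (Fin n)) :
    ∃ l ∈ Icc (0 : ℝ) 1, rho Φ (a • x + b • y) = rho Φ (l • x + (1 - l) • y) := by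
  refine ⟨a / (a + b), ⟨by positivity, div_le_one_of_le₀ (by linarith) hab.le⟩, ?_⟩
  rw [← rho_smul_of_pos hhom (inv_pos.2 hab) (a • x + b • y), one_sub_div hab.ne',
    add_sub_cancel_left]
  congr 1
  module

variable (hpos : ∀ x, x ≠ 0 → 0 < Φ x)
include hpos

theorem convex_rho_preimage {S : Set (EuclideanSpace ℝ (Fin n))} (hS : SConvex Φ S)
    (h0 : (0 : EuclideanSpace ℝ (Fin n)) ∉ S) : Convex ℝ (rho Φ ⁻¹' S) := by
  have hpos' : ∀ z ∈ rho Φ ⁻¹' S, 0 < Φ z := fun z hz =>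
    hpos z (by rintro rfl; exact h0 (by simpa using hz))
  intro z hz w hw a b ha hb hab
  obtain ⟨l, hl, heq⟩ := exists_rho_smul_add_smul_eq hhom (mul_nonneg ha (hpos' z hz).le)
    (mul_nonneg hb (hpos' w hw).le) (convex_Ioi (0 : ℝ) (hpos' z hz) (hpos' w hw) ha hb hab)
    (rho Φ z) (rho Φ w)
  have hcomb : a • z + b • w = (a * Φ z) • rho Φ z + (b * Φ w) • rho Φ w := by
    rw [mul_smul, mul_smul, smul_rho (hpos' z hz).ne', smul_rho (hpos' w hw).ne']
  rw [mem_preimage, hcomb, heq]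
  exact hS _ hz _ hw l hl

theorem sConvex_rho_image {C : Set (EuclideanSpace ℝ (Fin n))} (hC : Convex ℝ C)
    (h0 : (0 : EuclideanSpace ℝ (Fin n)) ∉ C) : SConvex Φ (rho Φ '' C) := by
  have hpos' : ∀ x ∈ C, 0 < (Φ x)⁻¹ := fun x hx => inv_pos.2 (hpos x (ne_of_mem_of_not_mem hx h0))
  rintro _ ⟨x, hx, rfl⟩ _ ⟨y, hy, rfl⟩ l ⟨hl0, hl1⟩
  obtain ⟨m, ⟨hm0, hm1⟩, heq⟩ := exists_rho_smul_add_smul_eq hhom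
    (mul_nonneg hl0 (hpos' x hx).le) (mul_nonneg (sub_nonneg.2 hl1) (hpos' y hy).le)
    (convex_Ioi (0 : ℝ) (hpos' x hx) (hpos' y hy) hl0 (sub_nonneg.2 hl1) (add_sub_cancel l 1)) x y
  have hcomb : l • rho Φ x + (1 - l) • rho Φ y = (l * (Φ x)⁻¹) • x + ((1 - l) * (Φ y)⁻¹) • y := by
    simp only [rho, mul_smul]
  rw [hcomb, heq]
  exact mem_image_of_mem _ (hC hx hy hm0 (sub_nonneg.2 hm1) (add_sub_cancel m 1))

omit hhom in
theorem continuousOn_rho (hc : Continuous Φ) : ContinuousOn (rho Φ) {0}ᶜ := fun x hx =>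
  ((hc.continuousAt.inv₀ (hpos x hx).ne').smul continuousAt_id).continuousWithinAt

theorem isBounded_sphereSet (hc : Continuous Φ) : Bornology.IsBounded (sphereSet Φ) := by
  obtain ⟨m, hm, hle⟩ := exists_pos_mul_norm_le_of_homogeneous hc hhom hpos
  refine isBounded_iff_forall_norm_le.2 ⟨m⁻¹, fun x hx => ?_⟩
  rw [← one_div, le_div_iff₀' hm, ← show Φ x = 1 from hx]
  exact hle x

end rho

theorem stmt11_general {n : ℕ} (Φ : EuclideanSpace ℝ (Fin n) → ℝ)
    (hc : Continuous Φ) (hnn : ∀ x, 0 ≤ Φ x)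
    (hhom : ∀ (t : ℝ), 0 ≤ t → ∀ x, Φ (t • x) = t * Φ x)
    (hzero : ∀ x, Φ x = 0 ↔ x = 0)
    (S : Set (EuclideanSpace ℝ (Fin n))) (hsub : S ⊆ sphereSet Φ) :
    (IsClosed S ∧ SConvex Φ S) ↔
      ∃ C : Set (EuclideanSpace ℝ (Fin n)),
        IsCompact C ∧ Convex ℝ C ∧ (0 : EuclideanSpace ℝ (Fin n)) ∉ C ∧ S = rho Φ '' C := by
  have hpos : ∀ x, x ≠ 0 → 0 < Φ x := fun x hx => (hnn x).lt_of_ne' (mt (hzero x).1 hx)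
  have h0S : (0 : EuclideanSpace ℝ (Fin n)) ∉ S := fun h => zero_notMem_sphereSet hhom (hsub h)
  constructor
  · rintro ⟨hScl, hSconv⟩
    have hScpt : IsCompact S := Metric.isCompact_of_isClosed_isBounded hScl
      ((isBounded_sphereSet hhom hpos hc).subset hsub)
    have hhull : convexHull ℝ S ⊆ rho Φ ⁻¹' S :=
      convexHull_min (fun x hx => by rwa [mem_preimage, rho_of_mem_sphereSet (hsub hx)])
        (convex_rho_preimage hhom hpos hSconv h0S)
    refine ⟨convexHull ℝ S, hScpt.convexHull, convex_convexHull ℝ S,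
      fun h => h0S (by simpa using hhull h), ?_⟩
    exact Subset.antisymm
      (fun x hx => ⟨x, subset_convexHull ℝ S hx, rho_of_mem_sphereSet (hsub hx)⟩)
      (image_subset_iff.2 hhull)
  · rintro ⟨C, hCcpt, hCconv, hC0, rfl⟩
    refine ⟨(hCcpt.image_of_continuousOn ((continuousOn_rho hpos hc).mono ?_)).isClosed,
      sConvex_rho_image hhom hpos hCconv hC0⟩
    exact fun x hx => ne_of_mem_of_not_mem hx hC0

theorem stmt11 {n : ℕ} (hn : 2 ≤ n) (Φ : EuclideanSpace ℝ (Fin n) → ℝ)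
    (hc : Continuous Φ) (hnn : ∀ x, 0 ≤ Φ x)
    (hhom : ∀ (t : ℝ), 0 ≤ t → ∀ x, Φ (t • x) = t * Φ x)
    (hzero : ∀ x, Φ x = 0 ↔ x = 0)
    (S : Set (EuclideanSpace ℝ (Fin n))) (hne : S.Nonempty) (hsub : S ⊆ sphereSet Φ) :
    (IsClosed S ∧ SConvex Φ S) ↔
      ∃ C : Set (EuclideanSpace ℝ (Fin n)),
        IsCompact C ∧ Convex ℝ C ∧ (0 : EuclideanSpace ℝ (Fin n)) ∉ C ∧ S = rho Φ '' C :=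
  stmt11_general Φ hc hnn hhom hzero S hsub
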